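/- Let d ∈ D be a diagonal matrix with entries d_1, …, d_n ∈ ℚ_p^*, and set ‖d‖_D = max(max_i |d_i|_p, max_i |d_i⁻¹|_p). Let u ∈ U be upper unipotent with ultralength ‖u‖ = max_{i<j} |u_ij|_p^{1/(j-i)}. Then ‖d⁻¹ u d‖ ≤ ‖d‖_D² · ‖u‖. -/

import Mathlib

/-- Upper unipotent matrix: upper triangular with all diagonal entries `1`. -/
def IsUpperUnipotent {p : ℕ} [Fact p.Prime] {n : ℕ}
    (M : Matrix (Fin n) (Fin n) ℚ_[p]) : Prop :=
  (∀ i j : Fin n, (j : ℕ) < (i : ℕ) → M i j = 0) ∧ ∀ i : Fin n, M i i = 1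

/-- `‖A‖ = max_{i<j} |a_{ij}|_p^{1/(j-i)}` for an upper unipotent matrix `A`. -/
noncomputable def unorm {p : ℕ} [Fact p.Prime] {n : ℕ}
    (M : Matrix (Fin n) (Fin n) ℚ_[p]) : ℝ :=
  ⨆ q : Fin n × Fin n,
    if (q.1 : ℕ) < (q.2 : ℕ)
    then ‖M q.1 q.2‖ ^ ((((q.2 : ℕ) : ℝ) - ((q.1 : ℕ) : ℝ))⁻¹)
    else 0

/-- `‖d‖_D = max_i max(|d_i|_p, |d_i⁻¹|_p)` for a diagonal matrix with entries `d i`. -/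
noncomputable def dnorm {p : ℕ} [Fact p.Prime] {n : ℕ} (d : Fin n → ℚ_[p]) : ℝ :=
  ⨆ i : Fin n, max ‖d i‖ ‖(d i)⁻¹‖

/-
The conjugated entry is `d_i⁻¹ u_ij d_j`, and `|d_i⁻¹|_p |d_j|_p ≤ ‖d‖_D²`. Taking the
`1/(j-i)`-th root can only shrink this factor, since `‖d‖_D ≥ 1` as soon as some `d_i ≠ 0`
(either `|d_i|_p ≥ 1` or `|d_i⁻¹|_p ≥ 1`), and `1/(j-i) ≤ 1`.
-/

lemma one_le_max_norm_norm_inv {𝕜 : Type*} [NormedDivisionRing 𝕜] {a : 𝕜} (ha : a ≠ 0) :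
    1 ≤ max ‖a‖ ‖a⁻¹‖ := by
  rcases le_or_gt 1 ‖a‖ with h | h
  · exact le_max_of_le_left h
  · rw [norm_inv]
    exact le_max_of_le_right ((one_le_inv₀ (norm_pos_iff.mpr ha)).mpr h.le)

lemma norm_inv_mul_mul_rpow_le {𝕜 : Type*} [NormedDivisionRing 𝕜] {a b c : 𝕜} {D r : ℝ}
    (ha : max ‖a‖ ‖a⁻¹‖ ≤ D) (hb : ‖b‖ ≤ D) (hr0 : 0 < r) (hr1 : r ≤ 1) :
    ‖a⁻¹ * c * b‖ ^ r ≤ D ^ 2 * ‖c‖ ^ r := by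
  have hD : 0 ≤ D := (norm_nonneg a).trans ((le_max_left _ _).trans ha)
  rcases eq_or_ne a 0 with rfl | ha0
  · rw [inv_zero, zero_mul, zero_mul, norm_zero, Real.zero_rpow hr0.ne']
    positivity
  have hD1 : 1 ≤ D := (one_le_max_norm_norm_inv ha0).trans ha
  have hab : ‖a⁻¹‖ * ‖b‖ ≤ D ^ 2 := by
    rw [sq]
    exact mul_le_mul ((le_max_right _ _).trans ha) hb (norm_nonneg _) hD
  calc ‖a⁻¹ * c * b‖ ^ r = (‖a⁻¹‖ * ‖b‖) ^ r * ‖c‖ ^ r := by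
        rw [norm_mul, norm_mul, mul_right_comm, Real.mul_rpow (by positivity) (norm_nonneg _)]
    _ ≤ (D ^ 2) ^ r * ‖c‖ ^ r := by gcongr
    _ ≤ D ^ 2 * ‖c‖ ^ r := by
        gcongr
        exact Real.rpow_le_self_of_one_le (one_le_pow₀ hD1) hr1

lemma inv_cast_sub_cast_mem_Ioc {i j : ℕ} (h : i < j) : ((j : ℝ) - i)⁻¹ ∈ Set.Ioc 0 1 := by
  have h1 : (1 : ℝ) ≤ j - i := by
    have : ((i + 1 : ℕ) : ℝ) ≤ j := Nat.cast_le.mpr h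
    push_cast at this
    linarith
  exact ⟨inv_pos.mpr (by linarith), inv_le_one_of_one_le₀ h1⟩

section

variable {p : ℕ} [Fact p.Prime] {n : ℕ}

lemma unorm_nonneg (M : Matrix (Fin n) (Fin n) ℚ_[p]) : 0 ≤ unorm M :=
  Real.iSup_nonneg fun q => by
    split_ifs
    exacts [Real.rpow_nonneg (norm_nonneg _) _, le_rfl]

lemma le_unorm (M : Matrix (Fin n) (Fin n) ℚ_[p]) {i j : Fin n} (hij : (i : ℕ) < j) :
    ‖M i j‖ ^ (((j : ℕ) : ℝ) - (i : ℕ))⁻¹ ≤ unorm M := by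
  have := le_ciSup (Set.finite_range fun q : Fin n × Fin n => if (q.1 : ℕ) < q.2
    then ‖M q.1 q.2‖ ^ ((((q.2 : ℕ) : ℝ) - (q.1 : ℕ))⁻¹) else 0).bddAbove (i, j)
  simpa [hij, unorm] using this

lemma unorm_le {M : Matrix (Fin n) (Fin n) ℚ_[p]} {C : ℝ} (hC : 0 ≤ C)
    (h : ∀ i j : Fin n, (i : ℕ) < j → ‖M i j‖ ^ (((j : ℕ) : ℝ) - (i : ℕ))⁻¹ ≤ C) :
    unorm M ≤ C :=
  Real.iSup_le (fun q => by split_ifs with hq; exacts [h q.1 q.2 hq, hC]) hC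

lemma dnorm_nonneg (d : Fin n → ℚ_[p]) : 0 ≤ dnorm d :=
  Real.iSup_nonneg fun _ => le_max_of_le_left (norm_nonneg _)

lemma le_dnorm (d : Fin n → ℚ_[p]) (i : Fin n) : max ‖d i‖ ‖(d i)⁻¹‖ ≤ dnorm d :=
  le_ciSup (Set.finite_range fun i => max ‖d i‖ ‖(d i)⁻¹‖).bddAbove i

end

theorem unorm_conj_le_general (p : ℕ) [Fact p.Prime] (n : ℕ)
    (d : Fin n → ℚ_[p])
    (u : Matrix (Fin n) (Fin n) ℚ_[p]) :
    unorm (Matrix.of fun i j => (d i)⁻¹ * u i j * d j) ≤ dnorm d ^ 2 * unorm u := by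
  refine unorm_le (mul_nonneg (pow_nonneg (dnorm_nonneg d) 2) (unorm_nonneg u))
    fun i j hij => ?_
  obtain ⟨hr0, hr1⟩ := inv_cast_sub_cast_mem_Ioc hij
  calc ‖(d i)⁻¹ * u i j * d j‖ ^ (((j : ℕ) : ℝ) - (i : ℕ))⁻¹
      ≤ dnorm d ^ 2 * ‖u i j‖ ^ (((j : ℕ) : ℝ) - (i : ℕ))⁻¹ :=
        norm_inv_mul_mul_rpow_le (le_dnorm d i)
          ((le_max_left _ _).trans (le_dnorm d j)) hr0 hr1
    _ ≤ dnorm d ^ 2 * unorm u := by gcongr; exact le_unorm u hij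

/-- Conjugation bound: `‖d⁻¹ u d‖ ≤ ‖d‖_D² ⬝ ‖u‖` where `(d⁻¹ u d)_{ij} = d_i⁻¹ u_{ij} d_j`. -/
theorem unorm_conj_le (p : ℕ) [Fact p.Prime] (n : ℕ)
    (d : Fin n → ℚ_[p]) (hd : ∀ i, d i ≠ 0)
    (u : Matrix (Fin n) (Fin n) ℚ_[p]) (hu : IsUpperUnipotent u) :
    unorm (Matrix.of fun i j => (d i)⁻¹ * u i j * d j) ≤ dnorm d ^ 2 * unorm u :=
  unorm_conj_le_general p n d u
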